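/- Gaussian mechanism achieves (ε,δ)-DP: for ε ∈ (0,1) and a function f: D → ℝ^k with ℓ₂-sensitivity Δ = max over adjacent d,d' of ‖f(d) − f(d')‖₂, the mechanism M(d) = f(d) + Z with Z ~ N(0, σ²·I_k) and σ ≥ √(2·ln(1.25/δ))·Δ/ε is (ε,δ)-differentially private. -/

import Mathlib

open MeasureTheory ProbabilityTheory

/-- `(ε,δ)`-differential privacy. -/
def DiffPrivate {D Y : Type*} [MeasurableSpace Y] (adj : D → D → Prop)
    (M : D → Measure Y) (ε δ : ℝ) : Prop :=
  ∀ d d', adj d d' → ∀ S : Set Y, MeasurableSet S →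
    M d S ≤ ENNReal.ofReal (Real.exp ε) * M d' S + ENNReal.ofReal δ

/-!
For `v = f d - f d'`, the law of `v + Z`, `Z ∼ N(0, σ² I)`, has density
`exp ((⟪v, z⟫ - ‖v‖² / 2) / σ²)` with respect to that of `Z`. Hence the two output laws differ
by at most a factor `e^ε` outside the event that this density exceeds `e^ε`. Under the law of
`v + Z`, `⟪v, z⟫ ∼ N(‖v‖², ‖v‖² σ²)`, and with `c = √(2 log (1.25 / δ))` and `c ‖v‖ ≤ ε σ ≤ σ`
the event lies at least `c - 1 / (2c)` standard deviations above the mean. The tail bound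
`P(N(0,1) > t) ≤ e^{-t²/2} / 2` (for `t ≥ 0`) then bounds its probability by
`1.25 e^{-c²/2} = δ`.
-/

open Real Set
open scoped NNReal ENNReal

lemma withDensity_apply_le_mul_add {Y : Type*} [MeasurableSpace Y] (Q : Measure Y) [SFinite Q]
    (ρ : Y → ℝ≥0∞) (c : ℝ≥0∞) (S : Set Y) :
    Q.withDensity ρ S ≤ c * Q S + Q.withDensity ρ {y | c < ρ y} := by
  have hgood : Q.withDensity ρ (S ∩ {y | ρ y ≤ c}) ≤ c * Q S :=
    calc Q.withDensity ρ (S ∩ {y | ρ y ≤ c})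
        = ∫⁻ y in S ∩ {y | ρ y ≤ c}, ρ y ∂Q := withDensity_apply' _ _
      _ ≤ ∫⁻ _ in S ∩ {y | ρ y ≤ c}, c ∂Q := setLIntegral_mono measurable_const fun y hy => hy.2
      _ = c * Q (S ∩ {y | ρ y ≤ c}) := setLIntegral_const _ _
      _ ≤ c * Q S := by gcongr; exact inter_subset_left
  calc Q.withDensity ρ S
      ≤ Q.withDensity ρ (S ∩ {y | ρ y ≤ c}) + Q.withDensity ρ (S \ {y | ρ y ≤ c}) :=
        measure_le_inter_add_sdiff _ _ _
    _ ≤ c * Q S + Q.withDensity ρ {y | c < ρ y} :=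
        add_le_add hgood (measure_mono fun y hy => show c < ρ y from not_le.1 hy.2)

lemma MeasureTheory.Measure.pi_withDensity {ι : Type*} [Fintype ι] {α : ι → Type*}
    [∀ i, MeasurableSpace (α i)] (μ : ∀ i, Measure (α i)) [∀ i, IsProbabilityMeasure (μ i)]
    {f : ∀ i, α i → ℝ≥0∞} (hf : ∀ i, Measurable (f i))
    [∀ i, SigmaFinite ((μ i).withDensity (f i))] :
    Measure.pi (fun i => (μ i).withDensity (f i))
      = (Measure.pi μ).withDensity (fun x => ∏ i, f i (x i)) := by
  refine Measure.pi_eq fun s hs => ?_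
  have hindicator : (univ.pi s).indicator (fun x => ∏ i, f i (x i))
      = fun x => ∏ i, (s i).indicator (f i) (x i) := by
    ext x
    by_cases hx : x ∈ univ.pi s
    · rw [indicator_of_mem hx]
      exact Finset.prod_congr rfl fun i _ => (indicator_of_mem (hx i (mem_univ i)) _).symm
    · obtain ⟨i, -, hi⟩ := by simpa only [mem_pi, not_forall] using hx
      rw [indicator_of_notMem hx, eq_comm]
      exact Finset.prod_eq_zero (Finset.mem_univ i) (indicator_of_notMem hi _)
  have hmeas (i : ι) : Measurable ((s i).indicator (f i)) := (hf i).indicator (hs i)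
  rw [withDensity_apply _ (.univ_pi hs), ← lintegral_indicator (.univ_pi hs), hindicator,
    lintegral_prod_eq_prod_lintegral_of_indepFun _ _ (iIndepFun_pi fun i => (hmeas i).aemeasurable)
      fun i => (hmeas i).comp (measurable_pi_apply i)]
  refine Finset.prod_congr rfl fun i _ => ?_
  rw [(measurePreserving_eval μ i).lintegral_comp (hmeas i), lintegral_indicator (hs i),
    withDensity_apply _ (hs i)]

lemma gaussianReal_eq_withDensity_gaussianReal_zero (m : ℝ) {w : ℝ≥0} (hw : w ≠ 0) :
    gaussianReal m w
      = (gaussianReal 0 w).withDensity fun x => ENNReal.ofReal (exp ((m * x - m ^ 2 / 2) / w)) := by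
  rw [gaussianReal_of_var_ne_zero _ hw, gaussianReal_of_var_ne_zero _ hw,
    ← withDensity_mul _ (measurable_gaussianPDF 0 w) (by fun_prop)]
  congr 1 with x
  rw [Pi.mul_apply, gaussianPDF, gaussianPDF, ← ENNReal.ofReal_mul (gaussianPDFReal_nonneg ..)]
  simp only [gaussianPDFReal, mul_assoc, ← exp_add]
  congr 3
  have : (w : ℝ) ≠ 0 := by exact_mod_cast hw
  field_simp
  ring

lemma pi_gaussianReal_eq_withDensity {ι : Type*} [Fintype ι] (m : ι → ℝ) {w : ℝ≥0} (hw : w ≠ 0) :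
    Measure.pi (fun i => gaussianReal (m i) w)
      = (Measure.pi fun _ : ι => gaussianReal 0 w).withDensity
          fun z => ENNReal.ofReal (exp ((∑ i, m i * z i - (∑ i, m i ^ 2) / 2) / w)) := by
  rw [funext fun i => gaussianReal_eq_withDensity_gaussianReal_zero (m i) hw,
    Measure.pi_withDensity _ fun i => by fun_prop]
  congr 1 with z
  rw [← ENNReal.ofReal_prod_of_nonneg fun i _ => (exp_pos _).le, ← exp_sum, ← Finset.sum_div,
    Finset.sum_sub_distrib, Finset.sum_div]

lemma map_pi_gaussianReal_const_add {ι : Type*} [Fintype ι] (w : ℝ≥0) (v : ι → ℝ) :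
    (Measure.pi fun _ : ι => gaussianReal 0 w).map (v + ·)
      = Measure.pi fun i => gaussianReal (v i) w := by
  rw [show (v + ·) = fun (z : ι → ℝ) i => v i + z i from rfl,
    Measure.pi_map_pi fun i => by fun_prop]
  simp only [gaussianReal_map_const_add, zero_add]

lemma map_pi_gaussianReal_sum_mul {ι : Type*} [Fintype ι] (m : ι → ℝ) (v : ι → ℝ≥0)
    (c : ι → ℝ) :
    (Measure.pi fun i => gaussianReal (m i) (v i)).map (fun z => ∑ i, c i * z i)
      = gaussianReal (∑ i, c i * m i) (∑ i, (c i ^ 2).toNNReal * v i) := by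
  have hcoord (i : ι) : (Measure.pi fun i => gaussianReal (m i) (v i)).map (fun z => c i * z i)
      = gaussianReal (c i * m i) ((c i ^ 2).toNNReal * v i) := by
    calc (Measure.pi fun i => gaussianReal (m i) (v i)).map (fun z => c i * z i)
        = ((Measure.pi fun i => gaussianReal (m i) (v i)).map (Function.eval i)).map (c i * ·) :=
          (Measure.map_map (measurable_const_mul _) (measurable_pi_apply i)).symm
      _ = gaussianReal (c i * m i) ((c i ^ 2).toNNReal * v i) := by
          rw [(measurePreserving_eval _ i).map_eq, gaussianReal_map_const_mul,
            Real.toNNReal_of_nonneg (sq_nonneg (c i))]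
  refine Measure.ext_of_charFun ?_
  have hindep : iIndepFun (fun i (z : ι → ℝ) => c i * z i)
      (Measure.pi fun i => gaussianReal (m i) (v i)) :=
    iIndepFun_pi (X := fun i x => c i * x) fun i => by fun_prop
  rw [hindep.charFun_map_fun_sum_eq_prod
    fun i => (measurable_pi_apply i).const_mul (c i) |>.aemeasurable]
  ext t
  simp only [Finset.prod_apply, hcoord, charFun_gaussianReal, ← Complex.exp_sum]
  push_cast
  rw [Finset.mul_sum, Finset.sum_mul, Finset.sum_mul, Finset.sum_div, ← Finset.sum_sub_distrib]

lemma gaussianReal_Ioi_zero : gaussianReal 0 1 (Ioi 0) = 2⁻¹ := by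
  have hint : ∫ x in Ioi (0:ℝ), gaussianPDFReal 0 1 x = 2⁻¹ := by
    simp only [gaussianPDFReal, NNReal.coe_one, sub_zero, mul_one]
    rw [integral_const_mul]
    simp_rw [neg_div, div_eq_inv_mul _ (2:ℝ), ← neg_mul]
    rw [integral_gaussian_Ioi, div_inv_eq_mul]
    field_simp
  rw [gaussianReal_apply_eq_integral _ one_ne_zero, hint, ENNReal.ofReal_inv_of_pos two_pos,
    ENNReal.ofReal_ofNat]

lemma gaussianReal_Ioi_eq (m : ℝ) {v : ℝ≥0} (hv : v ≠ 0) (x : ℝ) :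
    gaussianReal m v (Ioi x) = gaussianReal 0 1 (Ioi ((x - m) / √v)) := by
  have hσ : 0 < √(v : ℝ) := Real.sqrt_pos.2 (by positivity)
  have hstd : gaussianReal m v = ((gaussianReal 0 1).map (√(v : ℝ) * ·)).map (· + m) := by
    rw [gaussianReal_map_const_mul, gaussianReal_map_add_const, mul_zero, zero_add, mul_one]
    congr
    ext
    simp [Real.sq_sqrt v.coe_nonneg]
  rw [hstd, Measure.map_apply (by fun_prop) measurableSet_Ioi, preimage_add_const_Ioi,
    Measure.map_apply (by fun_prop) measurableSet_Ioi, preimage_const_mul_Ioi₀ _ hσ]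

lemma gaussianReal_Ioi_le_of_nonneg {t : ℝ} (ht : 0 ≤ t) :
    gaussianReal 0 1 (Ioi t) ≤ ENNReal.ofReal (exp (-t ^ 2 / 2) / 2) := by
  have hpdf : ∀ x ∈ Ioi t,
      gaussianPDF 0 1 x ≤ ENNReal.ofReal (exp (-t ^ 2 / 2)) * gaussianPDF t 1 x := by
    intro x hx
    rw [gaussianPDF, gaussianPDF, ← ENNReal.ofReal_mul (exp_pos _).le]
    refine ENNReal.ofReal_le_ofReal ?_
    simp only [gaussianPDFReal, NNReal.coe_one, mul_one]
    rw [mul_left_comm, ← exp_add]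
    gcongr
    nlinarith [mul_nonneg ht (sub_nonneg.2 (le_of_lt (mem_Ioi.1 hx)))]
  calc gaussianReal 0 1 (Ioi t) = ∫⁻ x in Ioi t, gaussianPDF 0 1 x :=
        gaussianReal_apply _ one_ne_zero _
    _ ≤ ∫⁻ x in Ioi t, ENNReal.ofReal (exp (-t ^ 2 / 2)) * gaussianPDF t 1 x :=
        setLIntegral_mono (by fun_prop) hpdf
    _ = ENNReal.ofReal (exp (-t ^ 2 / 2)) * gaussianReal t 1 (Ioi t) := by
        rw [lintegral_const_mul _ (measurable_gaussianPDF _ _), gaussianReal_apply _ one_ne_zero]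
    _ = ENNReal.ofReal (exp (-t ^ 2 / 2) / 2) := by
        rw [gaussianReal_Ioi_eq t one_ne_zero, sub_self, zero_div, gaussianReal_Ioi_zero,
          ENNReal.ofReal_div_of_pos two_pos, ENNReal.ofReal_ofNat, ENNReal.div_eq_inv_mul, mul_comm]

lemma gaussianPDF_zero_one_le (x : ℝ) : gaussianPDF 0 1 x ≤ ENNReal.ofReal 2⁻¹ := by
  refine ENNReal.ofReal_le_ofReal ?_
  have hsqrt : 2 ≤ √(2 * π * (1 : ℝ≥0)) :=
    Real.le_sqrt_of_sq_le (by push_cast; nlinarith [pi_gt_three])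
  calc gaussianPDFReal 0 1 x ≤ (√(2 * π * (1 : ℝ≥0)))⁻¹ * 1 :=
        mul_le_mul_of_nonneg_left (exp_le_one_iff.2
          (div_nonpos_of_nonpos_of_nonneg (neg_nonpos.2 (sq_nonneg _)) (by positivity)))
          (by positivity)
    _ ≤ 2⁻¹ := by rw [mul_one]; exact inv_anti₀ two_pos hsqrt

lemma gaussianReal_Ioi_le_of_nonpos {t : ℝ} (ht : t ≤ 0) :
    gaussianReal 0 1 (Ioi t) ≤ ENNReal.ofReal ((1 - t) / 2) := by
  have hmid : gaussianReal 0 1 (Ioc t 0) ≤ ENNReal.ofReal (-t / 2) :=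
    calc gaussianReal 0 1 (Ioc t 0) = ∫⁻ x in Ioc t 0, gaussianPDF 0 1 x :=
          gaussianReal_apply _ one_ne_zero _
      _ ≤ ∫⁻ _ in Ioc t 0, ENNReal.ofReal 2⁻¹ :=
          setLIntegral_mono measurable_const fun x _ => gaussianPDF_zero_one_le x
      _ = ENNReal.ofReal (-t / 2) := by
          rw [setLIntegral_const, Real.volume_Ioc, ← ENNReal.ofReal_mul (by norm_num)]
          congr 1
          ring
  calc gaussianReal 0 1 (Ioi t) ≤ gaussianReal 0 1 (Ioc t 0) + gaussianReal 0 1 (Ioi 0) := by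
        rw [← Ioc_union_Ioi_eq_Ioi ht]
        exact measure_union_le _ _
    _ ≤ ENNReal.ofReal (-t / 2) + ENNReal.ofReal 2⁻¹ := by
        rw [gaussianReal_Ioi_zero, ENNReal.ofReal_inv_of_pos two_pos, ENNReal.ofReal_ofNat]
        gcongr
    _ = ENNReal.ofReal ((1 - t) / 2) := by
        rw [← ENNReal.ofReal_add (by linarith) (by norm_num)]
        congr 1
        ring

lemma gaussianReal_Ioi_sub_inv_le {c : ℝ} (hc : 0 < c) :
    gaussianReal 0 1 (Ioi (c - 1 / (2 * c))) ≤ ENNReal.ofReal (1.25 * exp (-c ^ 2 / 2)) := by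
  have hexp : 1 - c ^ 2 / 2 ≤ exp (-c ^ 2 / 2) := by linarith [add_one_le_exp (-c ^ 2 / 2)]
  have hinv : 1 / (2 * c) * (2 * c) = 1 := one_div_mul_cancel (by positivity)
  -- For `c ≤ 3/5` the right-hand side exceeds `1`; beyond, the threshold `c - 1/(2c)` is
  -- nonnegative exactly when `2c² ≥ 1`.
  rcases le_or_gt c (3 / 5) with hc35 | hc35
  · calc gaussianReal 0 1 (Ioi (c - 1 / (2 * c))) ≤ 1 := prob_le_one
      _ = ENNReal.ofReal 1 := ENNReal.ofReal_one.symm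
      _ ≤ _ := ENNReal.ofReal_le_ofReal (by nlinarith)
  rcases le_or_gt (1 / 2) (c ^ 2) with hc2 | hc2
  · have ht : 0 ≤ c - 1 / (2 * c) := by nlinarith [one_div_pos.2 (by positivity : 0 < 2 * c)]
    refine (gaussianReal_Ioi_le_of_nonneg ht).trans (ENNReal.ofReal_le_ofReal ?_)
    have hsq : c ^ 2 - 1 ≤ (c - 1 / (2 * c)) ^ 2 := by nlinarith [sq_nonneg (1 / (2 * c))]
    have hhalf : exp (1 / 2) ≤ 2 := by
      have hlow := add_one_le_exp (-1 / 2)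
      have hprod : exp (1 / 2) * exp (-1 / 2) = 1 := by rw [← exp_add]; norm_num
      nlinarith [exp_pos (1 / 2)]
    calc exp (-(c - 1 / (2 * c)) ^ 2 / 2) / 2 ≤ exp (1 / 2 + -c ^ 2 / 2) / 2 := by
          gcongr
          linarith
      _ = exp (1 / 2) * exp (-c ^ 2 / 2) / 2 := by rw [exp_add]
      _ ≤ 1.25 * exp (-c ^ 2 / 2) := by nlinarith [exp_pos (-c ^ 2 / 2)]
  · have ht : c - 1 / (2 * c) ≤ 0 := by nlinarith [one_div_pos.2 (by positivity : 0 < 2 * c)]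
    refine (gaussianReal_Ioi_le_of_nonpos ht).trans (ENNReal.ofReal_le_ofReal ?_)
    have h56 : 1 / (2 * c) ≤ 5 / 6 := by nlinarith
    nlinarith

/-- `{⟪v, z⟫ > ε σ² + ‖v‖² / 2}` is the event that the privacy loss of the density in
`pi_gaussianReal_eq_withDensity` exceeds `ε`. -/
lemma pi_gaussianReal_privacyLoss_tail_le {ι : Type*} [Fintype ι] {v : ι → ℝ} {σ ε c : ℝ}
    (hσ : 0 < σ) (hε1 : ε ≤ 1) (hc : 0 < c) (hv : 0 < ∑ i, v i ^ 2)
    (hcv : c * √(∑ i, v i ^ 2) ≤ ε * σ) :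
    Measure.pi (fun i => gaussianReal (v i) (σ ^ 2).toNNReal)
        {z | ε * σ ^ 2 + (∑ i, v i ^ 2) / 2 < ∑ i, v i * z i}
      ≤ ENNReal.ofReal (1.25 * exp (-c ^ 2 / 2)) := by
  have hvar : ∑ i, (v i ^ 2).toNNReal * (σ ^ 2).toNNReal
      = ((∑ i, v i ^ 2) * σ ^ 2).toNNReal := by
    rw [Finset.sum_mul, Real.toNNReal_sum_of_nonneg fun i _ => by positivity]
    exact Finset.sum_congr rfl fun i _ => (Real.toNNReal_mul (sq_nonneg _)).symm
  have hvar0 : ((∑ i, v i ^ 2) * σ ^ 2).toNNReal ≠ 0 := by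
    rw [ne_eq, Real.toNNReal_eq_zero, not_le]
    positivity
  have hthreshold : c - 1 / (2 * c)
      ≤ (ε * σ ^ 2 + (∑ i, v i ^ 2) / 2 - ∑ i, v i ^ 2) / √((∑ i, v i ^ 2) * σ ^ 2) := by
    rw [Real.sqrt_mul hv.le, Real.sqrt_sq hσ.le]
    set s := √(∑ i, v i ^ 2)
    have hs : 0 < s := Real.sqrt_pos.2 hv
    rw [← Real.sq_sqrt hv.le]
    have hmean : c ≤ ε * σ / s := (le_div_iff₀ hs).2 hcv
    have hsd : s / (2 * σ) ≤ 1 / (2 * c) := by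
      rw [div_le_div_iff₀ (by positivity) (by positivity)]
      nlinarith
    calc c - 1 / (2 * c) ≤ ε * σ / s - s / (2 * σ) := by linarith
      _ = (ε * σ ^ 2 + s ^ 2 / 2 - s ^ 2) / (s * σ) := by field_simp; ring
  calc Measure.pi (fun i => gaussianReal (v i) (σ ^ 2).toNNReal)
        {z | ε * σ ^ 2 + (∑ i, v i ^ 2) / 2 < ∑ i, v i * z i}
      = gaussianReal (∑ i, v i * v i) (∑ i, (v i ^ 2).toNNReal * (σ ^ 2).toNNReal)
          (Ioi (ε * σ ^ 2 + (∑ i, v i ^ 2) / 2)) := by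
        rw [← map_pi_gaussianReal_sum_mul, Measure.map_apply (by fun_prop) measurableSet_Ioi]
        rfl
    _ = gaussianReal 0 1
          (Ioi ((ε * σ ^ 2 + (∑ i, v i ^ 2) / 2 - ∑ i, v i ^ 2) / √((∑ i, v i ^ 2) * σ ^ 2))) := by
        simp_rw [← sq]
        rw [hvar, gaussianReal_Ioi_eq _ hvar0, Real.coe_toNNReal _ (by positivity)]
    _ ≤ gaussianReal 0 1 (Ioi (c - 1 / (2 * c))) := measure_mono (Ioi_subset_Ioi hthreshold)
    _ ≤ ENNReal.ofReal (1.25 * exp (-c ^ 2 / 2)) := gaussianReal_Ioi_sub_inv_le hc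

theorem pi_gaussianReal_map_add_le {ι : Type*} [Fintype ι] {σ ε c : ℝ} (hε0 : 0 ≤ ε)
    (hε1 : ε ≤ 1) (hc : 0 < c) (a b : ι → ℝ) (hab : c * √(∑ i, (a i - b i) ^ 2) ≤ ε * σ)
    (S : Set (ι → ℝ)) :
    (Measure.pi fun _ : ι => gaussianReal 0 (σ ^ 2).toNNReal).map (a + ·) S
      ≤ ENNReal.ofReal (exp ε) *
          (Measure.pi fun _ : ι => gaussianReal 0 (σ ^ 2).toNNReal).map (b + ·) S
        + ENNReal.ofReal (1.25 * exp (-c ^ 2 / 2)) := by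
  set w := (σ ^ 2).toNNReal
  set μ := Measure.pi fun _ : ι => gaussianReal 0 w
  rcases (Finset.sum_nonneg fun i _ => sq_nonneg (a i - b i)).eq_or_lt with hv | hv
  · have hab : a = b := funext fun i => by
      have := (Finset.sum_eq_zero_iff_of_nonneg fun i _ => sq_nonneg (a i - b i)).1 hv.symm i
        (Finset.mem_univ i)
      exact sub_eq_zero.1 (pow_eq_zero_iff two_ne_zero |>.1 this)
    subst hab
    calc μ.map (a + ·) S ≤ ENNReal.ofReal (exp ε) * μ.map (a + ·) S :=
          le_mul_of_one_le_left' (ENNReal.one_le_ofReal.2 (one_le_exp hε0))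
      _ ≤ _ := le_self_add
  have hσ : 0 < σ := pos_of_mul_pos_right ((by positivity : 0 < c * √_).trans_le hab) hε0
  have hw : w ≠ 0 := by
    rw [ne_eq, Real.toNNReal_eq_zero, not_le]
    positivity
  have hshift : μ.map (a + ·) = (Measure.pi fun i => gaussianReal ((a - b) i) w).map (b + ·) := by
    rw [← map_pi_gaussianReal_const_add, Measure.map_map (by fun_prop) (by fun_prop)]
    congr 1 with z i
    simp only [Function.comp_apply, Pi.add_apply, Pi.sub_apply]
    ring
  have hbad : {z : ι → ℝ | ENNReal.ofReal (exp ε)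
        < ENNReal.ofReal (exp ((∑ i, (a - b) i * z i - (∑ i, (a - b) i ^ 2) / 2) / w))}
      = {z | ε * σ ^ 2 + (∑ i, (a - b) i ^ 2) / 2 < ∑ i, (a - b) i * z i} := by
    ext z
    rw [mem_ofPred_eq, mem_ofPred_eq, ENNReal.ofReal_lt_ofReal_iff (exp_pos _), exp_lt_exp,
      Real.coe_toNNReal _ (sq_nonneg σ), lt_div_iff₀ (by positivity)]
    constructor <;> intro h <;> linarith
  rw [hshift, ← MeasurableEquiv.coe_addLeft, MeasurableEquiv.map_apply, MeasurableEquiv.map_apply]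
  calc _ ≤ ENNReal.ofReal (exp ε) * μ (⇑(MeasurableEquiv.addLeft b) ⁻¹' S)
        + Measure.pi (fun i => gaussianReal ((a - b) i) w)
            {z | ε * σ ^ 2 + (∑ i, (a - b) i ^ 2) / 2 < ∑ i, (a - b) i * z i} := by
        rw [← hbad, pi_gaussianReal_eq_withDensity _ hw]
        exact withDensity_apply_le_mul_add _ _ _ _
    _ ≤ _ := by
        gcongr
        exact pi_gaussianReal_privacyLoss_tail_le hσ hε1 hc hv hab

theorem gaussian_mechanism_dp_general {D : Type*} (adj : D → D → Prop)
    (k : ℕ) (f : D → (Fin k → ℝ))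
    (Δ σ ε δ : ℝ) (hε : 0 < ε) (hε1 : ε < 1) (hδ : 0 < δ) (hδ1 : δ < 1)
    (hsens : ∀ d d', adj d d' →
      Real.sqrt (∑ i : Fin k, (f d i - f d' i) ^ 2) ≤ Δ)
    (hσ : σ ≥ Real.sqrt (2 * Real.log (1.25 / δ)) * Δ / ε)
    (M : D → Measure (Fin k → ℝ))
    (hM : M = fun d => Measure.map (fun z => f d + z)
      (Measure.pi (fun _ : Fin k => gaussianReal 0 (Real.toNNReal (σ ^ 2))))) :
    DiffPrivate adj M ε δ := by
  subst hM
  intro d d' hadj S _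
  have hL : 0 < Real.log (1.25 / δ) := Real.log_pos (by rw [lt_div_iff₀ hδ]; linarith)
  set c := √(2 * Real.log (1.25 / δ))
  have hc : 0 < c := Real.sqrt_pos.2 (by linarith)
  have hδc : 1.25 * exp (-c ^ 2 / 2) = δ := by
    rw [Real.sq_sqrt (by linarith), show -(2 * Real.log (1.25 / δ)) / 2 = -Real.log (1.25 / δ) by ring,
      exp_neg, exp_log (by positivity)]
    field_simp
  have hcΔ : c * √(∑ i, (f d i - f d' i) ^ 2) ≤ ε * σ := by
    rw [ge_iff_le, div_le_iff₀ hε] at hσ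
    nlinarith [mul_le_mul_of_nonneg_left (hsens d d' hadj) hc.le]
  simpa only [hδc] using pi_gaussianReal_map_add_le hε.le hε1.le hc (f d) (f d') hcΔ S

/-- The Gaussian mechanism achieves `(ε,δ)`-DP: for `ε ∈ (0,1)` and a function
`f : D → ℝ^k` of ℓ₂-sensitivity at most `Δ`, the mechanism `M(d) = f(d) + Z` with
`Z ~ N(0, σ²·I_k)` and `σ ≥ √(2·ln(1.25/δ))·Δ/ε` is `(ε,δ)`-differentially private. -/
theorem gaussian_mechanism_dp {D : Type*} (adj : D → D → Prop)
    (k : ℕ) (f : D → (Fin k → ℝ))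
    (Δ σ ε δ : ℝ) (hε : 0 < ε) (hε1 : ε < 1) (hδ : 0 < δ) (hδ1 : δ < 1)
    (hΔ : 0 < Δ)
    (hsens : ∀ d d', adj d d' →
      Real.sqrt (∑ i : Fin k, (f d i - f d' i) ^ 2) ≤ Δ)
    (hσ : σ ≥ Real.sqrt (2 * Real.log (1.25 / δ)) * Δ / ε)
    (M : D → Measure (Fin k → ℝ))
    (hM : M = fun d => Measure.map (fun z => f d + z)
      (Measure.pi (fun _ : Fin k => gaussianReal 0 (Real.toNNReal (σ ^ 2))))) :
    DiffPrivate adj M ε δ :=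
  gaussian_mechanism_dp_general adj k f Δ σ ε δ hε hε1 hδ hδ1 hsens hσ M hM
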